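/- arXiv:2504.09235 — 11 statements merged into one kernel-verified Lean document; each statement's English description precedes it below -/
import Mathlib

section
/- Let n ≥ 1 be a natural number, let G be an additive abelian group, and let b ∈ G with b ≠ 0. Suppose that b has infinite order or that 2 divides the order of b. Then there exists a coloring c : G → {0,…,2n−1} such that the equation (x₁−y₁)+(x₂−y₂)+⋯+(xₙ−yₙ) = b has no pairwise monochromatic solutions; that is, there are no x₁,y₁,…,xₙ,yₙ ∈ G with c(xᵢ) = c(yᵢ) for all i = 1,…,n and (x₁−y₁)+⋯+(xₙ−yₙ) = b. -/
universe u
open CategoryTheory in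
private theorem straus_hom (G : Type u) [AddCommGroup G] (b : G) (h2 : 2 ∣ addOrderOf b) :
    ∃ F : G →+ AddCircle (1:ℝ), F b = ((2⁻¹ : ℝ) : AddCircle (1:ℝ)) := by
  set half : AddCircle (1:ℝ) := ((2⁻¹ : ℝ) : AddCircle (1:ℝ)) with hhalf
  have hhalf2 : (2:ℤ) • half = 0 := by
    rw [hhalf, ← AddCircle.coe_zsmul]
    norm_num [AddCircle.coe_period]
  have welldef : ∀ k l : ℤ, k • b = l • b → k • half = l • half := by
    intro k l hkl
    have h1 : (k - l) • b = 0 := by simp [sub_zsmul, hkl]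
    have h2' : (addOrderOf b : ℤ) ∣ (k - l) := addOrderOf_dvd_iff_zsmul_eq_zero.mpr h1
    have h3 : (2:ℤ) ∣ (k - l) := dvd_trans (Int.natCast_dvd_natCast.mpr h2) h2'
    obtain ⟨m, hm⟩ := h3
    have hk : k = l + 2 * m := by omega
    rw [hk, add_zsmul, mul_comm, mul_zsmul, hhalf2, smul_zero, add_zero]
  have key : ∀ x : AddSubgroup.zmultiples b, ∃ k : ℤ, k • b = (x : G) :=
    fun x => AddSubgroup.mem_zmultiples_iff.mp x.2
  let φ : AddSubgroup.zmultiples b →+ AddCircle (1:ℝ) :=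
    { toFun := fun x => (key x).choose • half
      map_zero' := by
        show (key 0).choose • half = 0
        have := welldef (key 0).choose 0 (by rw [(key 0).choose_spec]; simp)
        simpa using this
      map_add' := by
        intro x y
        show (key (x+y)).choose • half = (key x).choose • half + (key y).choose • half
        have h : ((key x).choose + (key y).choose) • b = ((key (x+y)).choose) • b := by
          rw [add_zsmul, (key x).choose_spec, (key y).choose_spec, (key (x+y)).choose_spec]
          rfl
        rw [← welldef _ _ h, add_zsmul] }
  have hφb : φ ⟨b, AddSubgroup.mem_zmultiples b⟩ = half := by
    have h : (key ⟨b, AddSubgroup.mem_zmultiples b⟩).choose • b = (1:ℤ) • b := by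
      rw [(key _).choose_spec, one_zsmul]
    show (key _).choose • half = half
    simpa using welldef _ 1 h
  let φ' : AddSubgroup.zmultiples b →+ ULift.{u} (AddCircle (1:ℝ)) :=
    (AddEquiv.ulift.symm.toAddMonoidHom).comp φ
  haveI : Injective (AddCommGrpCat.of (ULift.{u} (AddCircle (1:ℝ)))) :=
    AddCommGrpCat.injective_of_divisible _
  haveI : Mono (AddCommGrpCat.ofHom (AddSubgroup.zmultiples b).subtype) :=
    (AddCommGrpCat.mono_iff_injective _).mpr (by exact Subtype.val_injective)
  let F' : AddCommGrpCat.of G ⟶ AddCommGrpCat.of (ULift.{u} (AddCircle (1:ℝ))) :=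
    Injective.factorThru (AddCommGrpCat.ofHom φ') (AddCommGrpCat.ofHom (AddSubgroup.zmultiples b).subtype)
  have hF : ∀ x : AddSubgroup.zmultiples b, F' (x : G) = φ' x := by
    intro x
    have := Injective.comp_factorThru (AddCommGrpCat.ofHom φ')
      (AddCommGrpCat.ofHom (AddSubgroup.zmultiples b).subtype)
    exact DFunLike.congr_fun (congrArg AddCommGrpCat.Hom.hom this) x
  refine ⟨(AddEquiv.ulift.toAddMonoidHom).comp F'.hom, ?_⟩
  show AddEquiv.ulift (F' b) = half
  rw [hF ⟨b, AddSubgroup.mem_zmultiples b⟩]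
  show AddEquiv.ulift (φ' ⟨b, AddSubgroup.mem_zmultiples b⟩) = half
  simp only [φ', AddMonoidHom.comp_apply, AddEquiv.coe_toAddMonoidHom,
    AddEquiv.apply_symm_apply, hφb]

/-- **Straus' theorem, even/infinite order case.**
If `b ≠ 0` has infinite additive order, or `2` divides its (finite) order, then there is a
`2n`-coloring of `G` such that `(x₁-y₁)+⋯+(xₙ-yₙ) = b` has no pairwise monochromatic solutions. -/
theorem straus_even_or_infinite_order (n : ℕ) (hn : 1 ≤ n)
    (G : Type*) [AddCommGroup G] (b : G) (hb : b ≠ 0)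
    (hord : ¬ IsOfFinAddOrder b ∨ (IsOfFinAddOrder b ∧ 2 ∣ addOrderOf b)) :
    ∃ c : G → Fin (2 * n),
      ¬ ∃ x y : Fin n → G,
        (∀ i, c (x i) = c (y i)) ∧ ∑ i, (x i - y i) = b := by
  have h2 : 2 ∣ addOrderOf b := by
    rcases hord with h | ⟨_, h⟩
    · rw [addOrderOf_eq_zero_iff.mpr h]; exact dvd_zero 2
    · exact h
  obtain ⟨F, hFb⟩ := straus_hom G b h2
  haveI : Fact ((0:ℝ) < 1) := ⟨one_pos⟩
  set r : G → ℝ := fun g => ((AddCircle.equivIco 1 0 (F g)) : ℝ) with hr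
  have hr_mem : ∀ g, r g ∈ Set.Ico (0:ℝ) 1 := by
    intro g
    have := (AddCircle.equivIco 1 0 (F g)).2
    simpa using this
  have hr_coe : ∀ g, ((r g : ℝ) : AddCircle (1:ℝ)) = F g := fun g =>
    (AddCircle.equivIco 1 0).symm_apply_apply (F g)
  have hnR : (0:ℝ) < 2 * n := by positivity
  refine ⟨fun g => ⟨⌊2 * (n:ℝ) * r g⌋₊, ?_⟩, ?_⟩
  · rw [Nat.floor_lt (by nlinarith [(hr_mem g).1])]
    push_cast
    nlinarith [(hr_mem g).2, (hr_mem g).1]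
  rintro ⟨x, y, hc, hsum⟩
  -- closeness of values on monochromatic pairs
  have hclose : ∀ i, |r (x i) - r (y i)| < 1 / (2 * n) := by
    intro i
    have h := congrArg (fun t : Fin (2*n) => (t : ℕ)) (hc i)
    simp only [Fin.val_mk] at h
    have h1 := Nat.floor_le (by nlinarith [(hr_mem (x i)).1] : (0:ℝ) ≤ 2 * (n:ℝ) * r (x i))
    have h2' := Nat.lt_floor_add_one (2 * (n:ℝ) * r (x i))
    have h3 := Nat.floor_le (by nlinarith [(hr_mem (y i)).1] : (0:ℝ) ≤ 2 * (n:ℝ) * r (y i))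
    have h4 := Nat.lt_floor_add_one (2 * (n:ℝ) * r (y i))
    rw [h] at h1 h2'
    rw [abs_lt]
    constructor
    · rw [← neg_div, div_lt_iff₀ hnR]
      nlinarith
    · rw [lt_div_iff₀ hnR]
      nlinarith
  set s : ℝ := ∑ i, (r (x i) - r (y i)) with hs
  have hs_bound : |s| < 1 / 2 := by
    calc |s| ≤ ∑ i, |r (x i) - r (y i)| := Finset.abs_sum_le_sum_abs _ _
    _ < ∑ _i : Fin n, (1 / (2 * (n:ℝ))) := by
        apply Finset.sum_lt_sum_of_nonempty
        · exact Finset.univ_nonempty_iff.mpr ⟨⟨0, hn⟩⟩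
        · intro i _; exact hclose i
    _ = 1 / 2 := by
        rw [Finset.sum_const, Finset.card_univ, Fintype.card_fin, nsmul_eq_mul]
        field_simp
  have hs_coe : ((s : ℝ) : AddCircle (1:ℝ)) = ((2⁻¹ : ℝ) : AddCircle (1:ℝ)) := by
    have mk_eq : ∀ t : ℝ, ((t : ℝ) : AddCircle (1:ℝ)) =
        QuotientAddGroup.mk' (AddSubgroup.zmultiples (1:ℝ)) t := fun _ => rfl
    have key1 : ∀ i : Fin n, QuotientAddGroup.mk' (AddSubgroup.zmultiples (1:ℝ))
        (r (x i) - r (y i)) = F (x i) - F (y i) := by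
      intro i
      rw [map_sub, ← mk_eq, ← mk_eq, hr_coe, hr_coe]
    calc ((s : ℝ) : AddCircle (1:ℝ)) = ∑ i, (F (x i) - F (y i)) := by
          rw [mk_eq, hs, map_sum]
          exact Finset.sum_congr rfl fun i _ => key1 i
      _ = F (∑ i, (x i - y i)) := by
          rw [map_sum]
          exact Finset.sum_congr rfl fun i _ => (map_sub F _ _).symm
      _ = _ := by rw [hsum, hFb]
  rw [QuotientAddGroup.eq_iff_sub_mem] at hs_coe
  obtain ⟨m, hm⟩ := AddSubgroup.mem_zmultiples_iff.mp hs_coe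
  rw [zsmul_eq_mul, mul_one] at hm
  have h1 : (-1 : ℝ) < m := by rw [hm]; have := abs_lt.mp hs_bound; linarith
  have h2'' : (m : ℝ) < 0 := by rw [hm]; have := abs_lt.mp hs_bound; linarith
  have : (-1 : ℤ) < m := by exact_mod_cast h1
  have : m < 0 := by exact_mod_cast h2''
  omega
end

section
/- Let n ≥ 1 be a natural number, let G be an additive abelian group, and let b ∈ G with b ≠ 0. Suppose that b has finite odd order d, and let p be the largest prime divisor of d. Then there exists a coloring c : G → {0,…,⌈2np/(p−1)⌉−1} with ⌈2np/(p−1)⌉ colors such that the equation (x₁−y₁)+(x₂−y₂)+⋯+(xₙ−yₙ) = b has no pairwise monochromatic solutions. -/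
/-- **Straus' theorem, odd order case.**
If `b ≠ 0` has finite odd additive order and `p` is the largest prime divisor of that order,
then there is a coloring of `G` with `⌈2np/(p-1)⌉` colors such that
`(x₁-y₁)+⋯+(xₙ-yₙ) = b` has no pairwise monochromatic solutions. -/
theorem straus_odd_order (n : ℕ) (hn : 1 ≤ n)
    (G : Type*) [AddCommGroup G] (b : G) (hb : b ≠ 0)
    (hfin : IsOfFinAddOrder b) (hodd : Odd (addOrderOf b))
    (p : ℕ) (hp : p.Prime) (hpdvd : p ∣ addOrderOf b)
    (hpmax : ∀ q : ℕ, q.Prime → q ∣ addOrderOf b → q ≤ p) :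
    ∃ c : G → Fin ⌈(2 * n * p : ℚ) / (p - 1)⌉₊,
      ¬ ∃ x y : Fin n → G,
        (∀ i, c (x i) = c (y i)) ∧ ∑ i, (x i - y i) = b := by
  classical
  haveI : Fact (0 < (1:ℚ)) := ⟨one_pos⟩
  set d := addOrderOf b with hd_def
  have hd0 : 0 < d := hfin.addOrderOf_pos
  -- p is odd, so p ≥ 3, and d ≥ p ≥ 3
  have hp2 : p ≠ 2 := by
    rintro rfl
    exact (Nat.not_even_iff_odd.mpr hodd) ((even_iff_two_dvd).mpr hpdvd)
  have hp3 : 3 ≤ p := by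
    have := hp.two_le; omega
  have hpd : p ≤ d := Nat.le_of_dvd hd0 hpdvd
  have hd3 : 3 ≤ d := le_trans hp3 hpd
  -- rational constants
  set K : ℕ := ⌈(2 * n * p : ℚ) / (p - 1)⌉₊ with hK_def
  have hPpos : (0:ℚ) < (p:ℚ) - 1 := by
    have : (3:ℚ) ≤ (p:ℚ) := by exact_mod_cast hp3
    linarith
  have hKge : (2 * n * p : ℚ) / (p - 1) ≤ (K:ℚ) := Nat.le_ceil _
  have hK0 : 0 < K := by
    rw [hK_def, Nat.ceil_pos]
    apply div_pos _ hPpos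
    have hn1 : (1:ℚ) ≤ (n:ℚ) := by exact_mod_cast hn
    have hp1 : (3:ℚ) ≤ (p:ℚ) := by exact_mod_cast hp3
    nlinarith
  have hKQ0 : (0:ℚ) < (K:ℚ) := by exact_mod_cast hK0
  set tq : ℚ := ((d:ℚ) - 1) / (2 * (d:ℚ)) with htq_def
  have hD1 : (3:ℚ) ≤ (d:ℚ) := by exact_mod_cast hd3
  have hD0 : (0:ℚ) < (d:ℚ) := by linarith
  -- key inequality : n / K ≤ tq
  have hnK : (n:ℚ) / K ≤ tq := by
    have h1 : (n:ℚ) / K ≤ ((p:ℚ) - 1) / (2 * p) := by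
      rw [div_le_div_iff₀ hKQ0 (by positivity)]
      have hstep : (n:ℚ) * (2 * p) = ((p:ℚ) - 1) * ((2 * n * p : ℚ) / (p - 1)) := by
        field_simp
      rw [hstep]
      have h1' : (0:ℚ) ≤ (p:ℚ) - 1 := le_of_lt hPpos
      exact mul_le_mul_of_nonneg_left hKge h1'
    have h2 : ((p:ℚ) - 1) / (2 * p) ≤ tq := by
      rw [htq_def, div_le_div_iff₀ (by positivity) (by positivity)]
      have : (p:ℚ) ≤ (d:ℚ) := by exact_mod_cast hpd
      nlinarith
    linarith
  have htq_lt : tq < 1 / 2 := by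
    rw [htq_def, div_lt_div_iff₀ (by positivity) (by norm_num)]
    linarith
  have htq_pos : 0 < tq := by
    rw [htq_def]
    apply div_pos (by linarith) (by positivity)
  -- the character χ : G → ℚ/ℤ with χ b = tq mod 1
  obtain ⟨t, ht⟩ := hodd
  set Q := AddCircle (1:ℚ) with hQ_def
  set qc : Q := ((tq : ℚ) : Q) with hqc_def
  have hdqc : (addOrderOf b : ℤ) • qc = 0 := by
    rw [hqc_def, ← AddCircle.coe_zsmul]
    have : (d:ℤ) • tq = (t:ℚ) := by
      rw [zsmul_eq_mul, htq_def, ht]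
      push_cast
      field_simp
      ring
    rw [this]
    rw [show ((t:ℚ) : Q) = 0 ↔ (t:ℚ) ∈ AddSubgroup.zmultiples (1:ℚ) from
      QuotientAddGroup.eq_zero_iff _]
    exact ⟨(t:ℤ), by simp⟩
  let φ : ℤ →ₗ[ℤ] G := LinearMap.toSpanSingleton ℤ G b
  let ψ : ℤ →ₗ[ℤ] Q := LinearMap.toSpanSingleton ℤ Q qc
  have hker : LinearMap.ker φ ≤ LinearMap.ker ψ := by
    intro m hm
    rw [LinearMap.mem_ker, LinearMap.toSpanSingleton_apply] at hm
    obtain ⟨s, rfl⟩ := (addOrderOf_dvd_iff_zsmul_eq_zero).mpr hm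
    rw [LinearMap.mem_ker, LinearMap.toSpanSingleton_apply, mul_smul, smul_comm, hdqc, smul_zero]
  let g0 : (ℤ ⧸ LinearMap.ker φ) →ₗ[ℤ] Q := Submodule.liftQ _ ψ hker
  let e := LinearMap.quotKerEquivRange φ
  let g : LinearMap.range φ →ₗ[ℤ] Q := g0 ∘ₗ e.symm.toLinearMap
  obtain ⟨χ, hχ⟩ := (Module.Baer.of_divisible Q).extension_property
      (LinearMap.range φ).subtype (Submodule.injective_subtype _) g
  have hbmem : b ∈ LinearMap.range φ := ⟨1, by simp [φ]⟩
  have hχb : χ b = qc := by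
    have h1 : χ b = g ⟨b, hbmem⟩ := by
      have := LinearMap.congr_fun hχ ⟨b, hbmem⟩
      simpa using this
    rw [h1]
    have he : e (Submodule.Quotient.mk 1) = ⟨b, hbmem⟩ := by
      ext
      rw [LinearMap.quotKerEquivRange_apply_mk]
      simp [φ]
    have he' : e.symm ⟨b, hbmem⟩ = Submodule.Quotient.mk 1 := by
      rw [← he, LinearEquiv.symm_apply_apply]
    show g0 (e.symm ⟨b, hbmem⟩) = qc
    rw [he']
    show ψ 1 = qc
    simp [ψ]
  -- the representative function
  let F : G → ℚ := fun z => ((AddCircle.equivIco 1 0 (χ z)) : ℚ)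
  have hFmem : ∀ z, F z ∈ Set.Ico (0:ℚ) 1 := fun z => by
    have := (AddCircle.equivIco 1 0 (χ z)).2
    simpa using this
  have hFχ : ∀ z, ((F z : ℚ) : Q) = χ z := fun z =>
    (AddCircle.equivIco 1 0).symm_apply_apply (χ z)
  -- the coloring
  refine ⟨fun z => ⟨(⌊(K:ℚ) * F z⌋).toNat, ?_⟩, ?_⟩
  · have h1 : ⌊(K:ℚ) * F z⌋ < (K:ℤ) := by
      apply Int.floor_lt.mpr
      push_cast
      have := (hFmem z).2
      nlinarith
    omega
  rintro ⟨x, y, hc, hsum⟩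
  -- each coordinate difference is small
  have hsmall : ∀ i, |F (x i) - F (y i)| < 1 / K := by
    intro i
    have hfl : ⌊(K:ℚ) * F (x i)⌋ = ⌊(K:ℚ) * F (y i)⌋ := by
      have h0x : 0 ≤ ⌊(K:ℚ) * F (x i)⌋ := Int.floor_nonneg.mpr (mul_nonneg (le_of_lt hKQ0) (hFmem _).1)
      have h0y : 0 ≤ ⌊(K:ℚ) * F (y i)⌋ := Int.floor_nonneg.mpr (mul_nonneg (le_of_lt hKQ0) (hFmem _).1)
      have := congrArg Fin.val (hc i)
      simp only at this
      omega
    have habs : |(K:ℚ) * F (x i) - (K:ℚ) * F (y i)| < 1 :=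
      Int.abs_sub_lt_one_of_floor_eq_floor hfl
    rw [← mul_sub, abs_mul, abs_of_pos hKQ0] at habs
    rw [lt_div_iff₀ hKQ0]
    linarith [habs]
  -- sum bound
  set s : ℚ := ∑ i, (F (x i) - F (y i)) with hs_def
  have hsbound : |s| < (n:ℚ) / K := by
    calc |s| ≤ ∑ i, |F (x i) - F (y i)| := Finset.abs_sum_le_sum_abs _ _
      _ < ∑ _i : Fin n, (1 / K : ℚ) := by
          apply Finset.sum_lt_sum_of_nonempty
          · exact Finset.univ_nonempty_iff.mpr (Fin.pos_iff_nonempty.mp hn)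
          · intro i _
            exact hsmall i
      _ = (n:ℚ) / K := by
          rw [Finset.sum_const, Finset.card_univ, Fintype.card_fin]
          push_cast
          ring
  -- mod 1, s equals tq
  have hsQ : ((s : ℚ) : Q) = qc := by
    have hcoe : ((s : ℚ) : Q) = ∑ i, (((F (x i) : ℚ) : Q) - ((F (y i) : ℚ) : Q)) := by
      rw [hs_def]
      calc ((∑ i, (F (x i) - F (y i)) : ℚ) : Q)
          = QuotientAddGroup.mk' (AddSubgroup.zmultiples (1:ℚ))
              (∑ i, (F (x i) - F (y i))) := rfl
        _ = ∑ i, QuotientAddGroup.mk' (AddSubgroup.zmultiples (1:ℚ))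
              (F (x i) - F (y i)) := map_sum _ _ _
        _ = ∑ i, (((F (x i) : ℚ) : Q) - ((F (y i) : ℚ) : Q)) := by
              refine Finset.sum_congr rfl fun i _ => ?_
              exact map_sub _ _ _
    rw [hcoe]
    have : ∀ i, ((F (x i) : ℚ) : Q) - ((F (y i) : ℚ) : Q) = χ (x i - y i) := by
      intro i
      rw [hFχ, hFχ, ← map_sub]
    simp_rw [this]
    rw [← map_sum, hsum, hχb]
  -- derive contradiction
  have hmem : s - tq ∈ AddSubgroup.zmultiples (1:ℚ) := by
    have h0 : ((s - tq : ℚ) : Q) = 0 := by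
      have h' : ((s - tq : ℚ) : Q) = ((s:ℚ):Q) - ((tq:ℚ):Q) :=
        map_sub (QuotientAddGroup.mk' (AddSubgroup.zmultiples (1:ℚ))) _ _
      rw [h', hsQ, hqc_def, sub_self]
    exact (QuotientAddGroup.eq_zero_iff _).mp h0
  obtain ⟨m, hm⟩ := AddSubgroup.mem_zmultiples_iff.mp hmem
  rw [zsmul_eq_mul, mul_one] at hm
  have habs' := abs_lt.mp hsbound
  have hub : (m:ℚ) < 0 := by
    rw [hm]
    linarith [habs'.2, hnK]
  have hlb : (-1:ℚ) < (m:ℚ) := by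
    rw [hm]
    have : -tq ≤ -((n:ℚ)/K) := by linarith
    linarith [habs'.1, htq_lt]
  have h1 : m < 0 := by exact_mod_cast hub
  have h2 : -1 < m := by exact_mod_cast hlb
  omega
end

section
/- Let n ≥ 1 be a natural number, let G be an additive abelian group, and let b ∈ G with b ≠ 0 having infinite order or order divisible by 2. Let f₁,…,fₙ : G → G be arbitrary mappings, and let m be the number of distinct mappings among f₁,…,fₙ (so m ≤ n). Then there exists a coloring c : G → {0,…,(2n)^m−1} with (2n)^m colors such that the equation (f₁(x₁)−f₁(y₁))+(f₂(x₂)−f₂(y₂))+⋯+(fₙ(xₙ)−fₙ(yₙ)) = b has no pairwise monochromatic solutions; that is, there are no x₁,y₁,…,xₙ,yₙ ∈ G with c(xᵢ) = c(yᵢ) for all i = 1,…,n and (f₁(x₁)−f₁(y₁))+⋯+(fₙ(xₙ)−fₙ(yₙ)) = b. -/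
/-- A character `G →+ ℚ/ℤ` sending an element `b` of infinite or even order to `1/2`. -/
theorem exists_character_eq_half {G : Type*} [AddCommGroup G] (b : G)
    (hord : ¬ IsOfFinAddOrder b ∨ (IsOfFinAddOrder b ∧ 2 ∣ addOrderOf b)) :
    ∃ φ : G →+ AddCircle (1 : ℚ), φ b = ((2⁻¹ : ℚ) : AddCircle (1 : ℚ)) := by
  have hdiv : (CharacterModule.int.divByNat 2).toIntLinearMap ((addOrderOf b : ℤ)) = 0 := by
    have hk : ∃ k : ℕ, addOrderOf b = 2 * k := by
      rcases hord with h | ⟨_, h⟩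
      · exact ⟨0, by simp [addOrderOf_eq_zero_iff.mpr h]⟩
      · exact h
    obtain ⟨k, hk⟩ := hk
    show CharacterModule.int.divByNat 2 _ = 0
    erw [CharacterModule.int.divByNat, LinearMap.toAddMonoidHom_coe,
      LinearMap.toSpanSingleton_apply, hk, ← QuotientAddGroup.mk_zsmul,
      AddCircle.coe_eq_zero_iff]
    exact ⟨k, by push_cast [zsmul_eq_mul]; ring⟩
  let l : (ℤ ⧸ Ideal.span {(addOrderOf b : ℤ)}) →ₗ[ℤ] AddCircle (1 : ℚ) :=
    Submodule.liftQSpanSingleton _ (CharacterModule.int.divByNat 2).toIntLinearMap hdiv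
  let ψ : CharacterModule (ℤ ∙ b) :=
    (l ∘ₗ (CharacterModule.intSpanEquivQuotAddOrderOf b).toLinearMap).toAddMonoidHom
  have hψ : ψ ⟨b, Submodule.mem_span_singleton_self b⟩ = ((2⁻¹ : ℚ) : AddCircle (1 : ℚ)) := by
    show l ((CharacterModule.intSpanEquivQuotAddOrderOf b) ⟨b, _⟩) = _
    rw [CharacterModule.intSpanEquivQuotAddOrderOf_apply_self]
    show (CharacterModule.int.divByNat 2) 1 = _
    erw [CharacterModule.int.divByNat, LinearMap.toAddMonoidHom_coe,
      LinearMap.toSpanSingleton_apply_one]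
    norm_num
  obtain ⟨φ, hφ⟩ := CharacterModule.dual_surjective_of_injective (Submodule.subtype (ℤ ∙ b))
    (Submodule.injective_subtype _) ψ
  refine ⟨φ, ?_⟩
  have := congrArg (fun (c : CharacterModule (ℤ ∙ b)) =>
    c ⟨b, Submodule.mem_span_singleton_self b⟩) hφ
  exact this.trans hψ

/-- **Straus* theorem, even/infinite order case.**
If `b ≠ 0` has infinite order or order divisible by `2`, and `f₁,…,fₙ : G → G` are arbitrary
mappings with `m` distinct ones among them, then there is a coloring of `G` with `(2n)^m` colors
such that `(f₁(x₁)-f₁(y₁))+⋯+(fₙ(xₙ)-fₙ(yₙ)) = b` has no pairwise monochromatic solutions. -/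
theorem strausStar_even_or_infinite_order (n : ℕ) (hn : 1 ≤ n)
    (G : Type*) [AddCommGroup G] (b : G) (hb : b ≠ 0)
    (hord : ¬ IsOfFinAddOrder b ∨ (IsOfFinAddOrder b ∧ 2 ∣ addOrderOf b))
    (f : Fin n → (G → G)) :
    ∃ c : G → Fin ((2 * n) ^ (Set.range f).ncard),
      ¬ ∃ x y : Fin n → G,
        (∀ i, c (x i) = c (y i)) ∧ ∑ i, (f i (x i) - f i (y i)) = b := by
  classical
  haveI : Fact ((0:ℚ) < 1) := ⟨one_pos⟩
  obtain ⟨φ, hφb⟩ := exists_character_eq_half b hord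
  set S : Set (G → G) := Set.range f with hS
  have hfin : S.Finite := Set.finite_range f
  haveI := hfin.fintype
  have hcard : Fintype.card S = S.ncard := by
    rw [← Nat.card_coe_set_eq, Nat.card_eq_fintype_card]
  let e : Fin S.ncard ≃ S := (Fintype.equivFinOfCardEq hcard).symm
  have hN : 0 < 2 * n := by omega
  let lift : AddCircle (1:ℚ) → ℚ := fun t => (AddCircle.equivIco 1 0 t : ℚ)
  have hlift_mem : ∀ t, lift t ∈ Set.Ico (0:ℚ) 1 := fun t => by
    simpa using (AddCircle.equivIco 1 0 t).2
  have hlift_coe : ∀ t, ((lift t : ℚ) : AddCircle (1:ℚ)) = t := fun t =>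
    (AddCircle.equivIco 1 0).symm_apply_apply t
  let idx : ℚ → Fin (2 * n) := fun q => ⟨(⌊(2 * n : ℚ) * q⌋).toNat % (2 * n), Nat.mod_lt _ hN⟩
  have key : ∀ q r : ℚ, q ∈ Set.Ico (0:ℚ) 1 → r ∈ Set.Ico (0:ℚ) 1 → idx q = idx r →
      |q - r| < 1 / (2 * n) := by
    intro q r hq hr h
    have h2n : (0:ℚ) < 2 * n := by positivity
    have hfl : ∀ s : ℚ, s ∈ Set.Ico (0:ℚ) 1 →
        0 ≤ ⌊(2 * n : ℚ) * s⌋ ∧ ⌊(2 * n : ℚ) * s⌋ < 2 * n := by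
      intro s hs
      constructor
      · exact Int.floor_nonneg.mpr (mul_nonneg h2n.le hs.1)
      · have : (2 * n : ℚ) * s < 2 * n := by
          calc (2 * n : ℚ) * s < 2 * n * 1 := by
                exact mul_lt_mul_of_pos_left hs.2 h2n
            _ = 2 * n := mul_one _
        exact_mod_cast Int.floor_lt.mpr (by exact_mod_cast this)
    obtain ⟨hq0, hq1⟩ := hfl q hq
    obtain ⟨hr0, hr1⟩ := hfl r hr
    have hmk : (⌊(2 * n : ℚ) * q⌋).toNat % (2 * n) = (⌊(2 * n : ℚ) * r⌋).toNat % (2 * n) := by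
      exact congrArg Fin.val h
    have htq : (⌊(2 * n : ℚ) * q⌋).toNat < 2 * n := by omega
    have htr : (⌊(2 * n : ℚ) * r⌋).toNat < 2 * n := by omega
    rw [Nat.mod_eq_of_lt htq, Nat.mod_eq_of_lt htr] at hmk
    have hfeq : ⌊(2 * n : ℚ) * q⌋ = ⌊(2 * n : ℚ) * r⌋ := by omega
    have habs := Int.abs_sub_lt_one_of_floor_eq_floor hfeq
    have : |(2 * n : ℚ) * (q - r)| < 1 := by
      rw [mul_sub]; exact habs
    rw [abs_mul, abs_of_pos h2n] at this
    rw [lt_div_iff₀ h2n]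
    linarith
  refine ⟨fun g => finFunctionFinEquiv (fun j => idx (lift (φ ((e j : G → G) g)))), ?_⟩
  rintro ⟨x, y, hc, hsum⟩
  set u : Fin n → ℚ := fun i => lift (φ (f i (x i))) with hu
  set v : Fin n → ℚ := fun i => lift (φ (f i (y i))) with hv
  have hdiff : ∀ i, |u i - v i| < 1 / (2 * n) := by
    intro i
    have hmem : f i ∈ S := Set.mem_range_self i
    set j0 : Fin S.ncard := e.symm ⟨f i, hmem⟩ with hj0
    have hej : (e j0 : G → G) = f i := by
      rw [hj0, Equiv.apply_symm_apply]
    have h1 := congrArg (fun t => (finFunctionFinEquiv.symm t) j0) (hc i)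
    simp only [Equiv.symm_apply_apply] at h1
    rw [hej] at h1
    exact key _ _ (hlift_mem _) (hlift_mem _) h1
  -- push the sum through φ
  have hsum' : ((∑ i, (u i - v i) : ℚ) : AddCircle (1:ℚ)) = ((2⁻¹ : ℚ) : AddCircle (1:ℚ)) := by
    have hcoe : ((∑ i, (u i - v i) : ℚ) : AddCircle (1:ℚ))
        = ∑ i, (((u i : ℚ) : AddCircle (1:ℚ)) - ((v i : ℚ) : AddCircle (1:ℚ))) := by
      have := map_sum (QuotientAddGroup.mk' (AddSubgroup.zmultiples (1:ℚ)))
        (fun i => u i - v i) Finset.univ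
      simpa [QuotientAddGroup.mk'_apply, sub_eq_add_neg] using this
    rw [hcoe]
    have : ∀ i, ((u i : ℚ) : AddCircle (1:ℚ)) - ((v i : ℚ) : AddCircle (1:ℚ))
        = φ (f i (x i)) - φ (f i (y i)) := by
      intro i; rw [hu, hv, hlift_coe, hlift_coe]
    rw [Finset.sum_congr rfl (fun i _ => this i)]
    rw [← hφb, ← hsum, map_sum]
    exact Finset.sum_congr rfl (fun i _ => (map_sub φ _ _).symm)
  obtain ⟨z, hz⟩ : ∃ z : ℤ, z • (1:ℚ) = (∑ i, (u i - v i)) - 2⁻¹ := by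
    rw [← AddCircle.coe_eq_zero_iff]
    push_cast
    rw [QuotientAddGroup.mk_sub]
    rw [hsum', sub_self]
  haveI : Nonempty (Fin n) := ⟨⟨0, hn⟩⟩
  have hnQ : (0:ℚ) < n := by exact_mod_cast hn
  have habs : |∑ i, (u i - v i)| < 2⁻¹ := by
    calc |∑ i, (u i - v i)| ≤ ∑ i, |u i - v i| := Finset.abs_sum_le_sum_abs _ _
      _ < ∑ _i : Fin n, (1 / (2 * n) : ℚ) :=
          Finset.sum_lt_sum_of_nonempty Finset.univ_nonempty (fun i _ => hdiff i)
      _ = n * (1 / (2 * n)) := by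
          rw [Finset.sum_const, Finset.card_univ, Fintype.card_fin, nsmul_eq_mul]
      _ = 2⁻¹ := by field_simp
  rw [zsmul_eq_mul, mul_one] at hz
  have h1 : (z:ℚ) < 0 := by
    have := (abs_lt.mp habs).2; linarith
  have h2 : (-1:ℚ) < z := by
    have := (abs_lt.mp habs).1; linarith
  have h1' : z < 0 := by exact_mod_cast h1
  have h2' : (-1:ℤ) < z := by exact_mod_cast h2
  omega
end

section
/- Let n ≥ 1 be a natural number and let T = ℝ/ℤ be the circle group (the additive quotient of ℝ by the subgroup of integers). Then there exists a coloring c : T → {0,…,2n−1} with 2n colors such that there are no x₁,y₁,…,xₙ,yₙ ∈ T with c(xᵢ) = c(yᵢ) for all i = 1,…,n and (x₁−y₁)+(x₂−y₂)+⋯+(xₙ−yₙ) equal to the image of 1/2 in T. (Such a coloring is obtained by coloring each interval [(i−1)/(2n), i/(2n)), i = 1,…,2n, of [0,1) with a distinct color.) -/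
/-- There is a `2n`-coloring of the circle group `ℝ/ℤ` such that no pairwise monochromatic tuple
`(x₁,y₁,…,xₙ,yₙ)` satisfies `(x₁-y₁)+⋯+(xₙ-yₙ) = 1/2`. -/
theorem circle_coloring_half (n : ℕ) (hn : 1 ≤ n) :
    ∃ c : AddCircle (1 : ℝ) → Fin (2 * n),
      ¬ ∃ x y : Fin n → AddCircle (1 : ℝ),
        (∀ i, c (x i) = c (y i)) ∧
          ∑ i, (x i - y i) = ((1 / 2 : ℝ) : AddCircle (1 : ℝ)) := by
  haveI : Fact ((0:ℝ) < 1) := ⟨one_pos⟩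
  set L : AddCircle (1:ℝ) → ℝ := fun t => ((AddCircle.equivIco 1 0 t : ℝ)) with hL
  have hLmem : ∀ t, L t ∈ Set.Ico (0:ℝ) 1 := by
    intro t
    have := (AddCircle.equivIco 1 0 t).2
    simpa using this
  have hLcoe : ∀ t : AddCircle (1:ℝ), ((L t : ℝ) : AddCircle (1:ℝ)) = t := by
    intro t
    exact (AddCircle.equivIco 1 0).symm_apply_apply t
  have hnpos : (0:ℝ) < 2 * n := by positivity
  refine ⟨fun t => ⟨(⌊(2 * n : ℝ) * L t⌋).toNat, ?_⟩, ?_⟩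
  · have h0 : (0:ℝ) ≤ (2 * n : ℝ) * L t := by
      have := (hLmem t).1; positivity
    have h1 : (2 * n : ℝ) * L t < 2 * n := by
      have := (hLmem t).2
      calc (2 * n : ℝ) * L t < 2 * n * 1 := by
            exact mul_lt_mul_of_pos_left this hnpos
        _ = 2 * n := by ring
    have hfl : ⌊(2 * n : ℝ) * L t⌋ < (2 * n : ℤ) := by
      rw [Int.floor_lt]; push_cast; exact h1
    omega
  · rintro ⟨x, y, hc, hsum⟩
    have key : ∀ i, |L (x i) - L (y i)| < 1 / (2 * n) := by
      intro i
      have h := hc i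
      have hfl : ⌊(2 * n : ℝ) * L (x i)⌋ = ⌊(2 * n : ℝ) * L (y i)⌋ := by
        have := congrArg Fin.val h
        simp only at this
        have hx0 : (0:ℤ) ≤ ⌊(2 * n : ℝ) * L (x i)⌋ := by
          apply Int.floor_nonneg.mpr; have := (hLmem (x i)).1; positivity
        have hy0 : (0:ℤ) ≤ ⌊(2 * n : ℝ) * L (y i)⌋ := by
          apply Int.floor_nonneg.mpr; have := (hLmem (y i)).1; positivity
        omega
      have hflr : ((⌊(2 * n : ℝ) * L (x i)⌋ : ℤ) : ℝ) = ((⌊(2 * n : ℝ) * L (y i)⌋ : ℤ) : ℝ) := by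
        exact_mod_cast hfl
      have hx := Int.lt_floor_add_one ((2 * n : ℝ) * L (x i))
      have hx' := Int.floor_le ((2 * n : ℝ) * L (x i))
      have hy := Int.lt_floor_add_one ((2 * n : ℝ) * L (y i))
      have hy' := Int.floor_le ((2 * n : ℝ) * L (y i))
      rw [abs_sub_lt_iff]
      constructor <;> rw [lt_div_iff₀ hnpos] <;> nlinarith
    set s : ℝ := ∑ i, (L (x i) - L (y i)) with hs
    have hsb : |s| < 1 / 2 := by
      calc |s| ≤ ∑ i, |L (x i) - L (y i)| := Finset.abs_sum_le_sum_abs _ _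
        _ < ∑ _i : Fin n, (1 / (2 * n) : ℝ) := by
            apply Finset.sum_lt_sum_of_nonempty
            · exact Finset.univ_nonempty_iff.mpr (Fin.pos_iff_nonempty.mp (by omega))
            · intro i _; exact key i
        _ = (n : ℝ) * (1 / (2 * n)) := by
            simp [Finset.sum_const, nsmul_eq_mul]
        _ = 1 / 2 := by
            have hn0 : (n:ℝ) ≠ 0 := by positivity
            field_simp
    have hcast : ((s : ℝ) : AddCircle (1:ℝ)) = ((1 / 2 : ℝ) : AddCircle (1:ℝ)) := by
      rw [← hsum, hs]
      show (QuotientAddGroup.mk' (AddSubgroup.zmultiples (1:ℝ))) (∑ i, (L (x i) - L (y i))) = _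
      rw [map_sum]
      apply Finset.sum_congr rfl
      intro i _
      show (((L (x i) - L (y i) : ℝ)) : AddCircle (1:ℝ)) = x i - y i
      rw [QuotientAddGroup.mk_sub, hLcoe, hLcoe]
    have h0 : ((s - 1/2 : ℝ) : AddCircle (1:ℝ)) = 0 := by
      rw [QuotientAddGroup.mk_sub, hcast, sub_self]
    rw [AddCircle.coe_eq_zero_iff] at h0
    obtain ⟨k, hk⟩ := h0
    have hk' : (k : ℝ) = s - 1/2 := by simpa using hk
    obtain ⟨hs1, hs2⟩ := abs_lt.mp hsb
    have h1 : (k:ℝ) < 0 := by rw [hk']; linarith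
    have h2 : (-1:ℝ) < k := by rw [hk']; linarith
    have hk1 : (k:ℤ) < 0 := by exact_mod_cast h1
    have hk2 : (-1:ℤ) < k := by exact_mod_cast h2
    omega
end

section
/- Let n ≥ 1 be a natural number, let p be an odd prime, and let T = ℝ/ℤ be the circle group. Then there exists a coloring c : T → {0,…,⌈2np/(p−1)⌉−1} with ⌈2np/(p−1)⌉ colors such that there are no x₁,y₁,…,xₙ,yₙ ∈ T with c(xᵢ) = c(yᵢ) for all i = 1,…,n and (x₁−y₁)+(x₂−y₂)+⋯+(xₙ−yₙ) equal to the image of (p−1)/(2p) in T. (Such a coloring is obtained by coloring each interval [(i−1)(p−1)/(2np), min{i(p−1)/(2np), 1}) of [0,1) with a distinct color.) -/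
/-- For an odd prime `p`, there is a coloring of the circle group `ℝ/ℤ` with `⌈2np/(p-1)⌉` colors
such that no pairwise monochromatic tuple `(x₁,y₁,…,xₙ,yₙ)` satisfies
`(x₁-y₁)+⋯+(xₙ-yₙ) = (p-1)/(2p)`. -/
theorem circle_coloring_odd_prime (n : ℕ) (hn : 1 ≤ n) (p : ℕ) (hp : p.Prime) (hodd : Odd p) :
    ∃ c : AddCircle (1 : ℝ) → Fin ⌈(2 * n * p : ℚ) / (p - 1)⌉₊,
      ¬ ∃ x y : Fin n → AddCircle (1 : ℝ),
        (∀ i, c (x i) = c (y i)) ∧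
          ∑ i, (x i - y i) = (((p - 1 : ℝ) / (2 * p) : ℝ) : AddCircle (1 : ℝ)) := by
  haveI : Fact ((0:ℝ) < 1) := ⟨zero_lt_one⟩
  have hp2 : 2 ≤ p := hp.two_le
  have hp1R : (1:ℝ) < p := by exact_mod_cast hp.one_lt
  have hnR : (1:ℝ) ≤ n := by exact_mod_cast hn
  set ε : ℝ := ((p:ℝ) - 1) / (2 * n * p) with hε_def
  have hpR : (0:ℝ) < p := by linarith
  have hεpos : 0 < ε := by
    apply div_pos (by linarith) (by positivity)
  set K : ℕ := ⌈(2 * n * p : ℚ) / (p - 1)⌉₊ with hK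
  have hKε : 1 / ε ≤ (K : ℝ) := by
    have h1 : ((2 * n * p : ℚ) / (p - 1) : ℚ) ≤ (K : ℚ) := Nat.le_ceil _
    have h2 : (1:ℝ) / ε = (2 * n * p : ℝ) / ((p:ℝ) - 1) := by
      rw [hε_def, one_div_div]
    rw [h2]
    have := (Rat.cast_le (K := ℝ)).mpr h1
    push_cast at this ⊢
    convert this using 2
  set f : AddCircle (1:ℝ) → ℝ := fun z => ((AddCircle.equivIco 1 0 z : ℝ)) with hf
  have hf_mem : ∀ z, f z ∈ Set.Ico (0:ℝ) 1 := by
    intro z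
    have := (AddCircle.equivIco 1 0 z).2
    simpa using this
  have hf_lift : ∀ z : AddCircle (1:ℝ), ((f z : ℝ) : AddCircle (1:ℝ)) = z := fun z =>
    (AddCircle.equivIco 1 0).symm_apply_apply z
  have hcolor_lt : ∀ z, ⌊f z / ε⌋₊ < K := by
    intro z
    have h0 : 0 ≤ f z := (hf_mem z).1
    have h1 : f z < 1 := (hf_mem z).2
    have : f z / ε < (K : ℝ) := by
      calc f z / ε < 1 / ε := by gcongr
        _ ≤ K := hKε
    exact Nat.floor_lt (by positivity) |>.mpr this
  refine ⟨fun z => ⟨⌊f z / ε⌋₊, hcolor_lt z⟩, ?_⟩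
  rintro ⟨x, y, hc, hsum⟩
  -- from equal colors, |f (x i) - f (y i)| < ε
  have key : ∀ i, |f (x i) - f (y i)| < ε := by
    intro i
    have h := hc i
    simp only [Fin.mk.injEq] at h
    set m := ⌊f (x i) / ε⌋₊ with hm
    have hx0 : 0 ≤ f (x i) / ε := div_nonneg (hf_mem _).1 hεpos.le
    have hy0 : 0 ≤ f (y i) / ε := div_nonneg (hf_mem _).1 hεpos.le
    have hx1 : (m:ℝ) * ε ≤ f (x i) := by
      rw [← le_div_iff₀ hεpos]; exact Nat.floor_le hx0
    have hx2 : f (x i) < ((m:ℝ) + 1) * ε := by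
      rw [← div_lt_iff₀ hεpos]; push_cast; exact Nat.lt_floor_add_one _
    have hy1 : (m:ℝ) * ε ≤ f (y i) := by
      rw [← le_div_iff₀ hεpos, h]; exact Nat.floor_le hy0
    have hy2 : f (y i) < ((m:ℝ) + 1) * ε := by
      rw [← div_lt_iff₀ hεpos, h]; push_cast; exact Nat.lt_floor_add_one _
    rw [abs_lt]
    constructor <;> [linarith; linarith]
  set s : ℝ := ∑ i, (f (x i) - f (y i)) with hs
  have hs_bound : |s| < (((p:ℝ) - 1) / (2 * p)) := by
    have h1 : |s| ≤ ∑ i, |f (x i) - f (y i)| := Finset.abs_sum_le_sum_abs _ _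
    have h2 : ∑ i, |f (x i) - f (y i)| < ∑ _i : Fin n, ε := by
      apply Finset.sum_lt_sum_of_nonempty
      · exact Finset.univ_nonempty_iff.mpr (Fin.pos_iff_nonempty.mp hn)
      · intro i _; exact key i
    have h3 : ∑ _i : Fin n, ε = n * ε := by simp [mul_comm]
    have h4 : (n:ℝ) * ε = ((p:ℝ) - 1) / (2 * p) := by
      rw [hε_def]
      field_simp
    calc |s| ≤ _ := h1
      _ < n * ε := by rw [← h3]; exact h2
      _ = _ := h4
  -- sum in the circle equals image of s
  have hsum' : ((s : ℝ) : AddCircle (1:ℝ)) = (((p - 1 : ℝ) / (2 * p) : ℝ) : AddCircle (1:ℝ)) := by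
    rw [← hsum, hs, QuotientAddGroup.mk_sum]
    apply Finset.sum_congr rfl
    intro i _
    rw [QuotientAddGroup.mk_sub, hf_lift, hf_lift]
  -- so s - (p-1)/(2p) is an integer
  have hmem := QuotientAddGroup.eq.mp hsum'
  rw [AddSubgroup.mem_zmultiples_iff] at hmem
  obtain ⟨k, hk⟩ := hmem
  have hk' : (k:ℝ) = -s + ((p:ℝ) - 1) / (2 * p) := by
    rw [← hk]; simp [zsmul_eq_mul]
  have habs := abs_lt.mp hs_bound
  have hb : ((p:ℝ) - 1) / (2 * p) < 1 / 2 := by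
    rw [div_lt_div_iff₀ (by positivity) (by norm_num)]; linarith
  have hk0 : (0:ℝ) < k := by linarith [habs.2]
  have hk0' : (0:ℤ) < k := by exact_mod_cast hk0
  have hk1 : (1:ℝ) ≤ k := by exact_mod_cast hk0'
  linarith [habs.1]
end

section
/- Let G be an additive abelian group, let b ∈ G with b ≠ 0, and let B be a subgroup of G that is maximal subject to not containing b (i.e., b ∉ B and every subgroup of G strictly containing B contains b). Then the image b̄ of b in the quotient group G/B has finite order, and this order is a prime number. -/
/-- If `B` is a subgroup of the abelian group `G` maximal subject to not containing `b ≠ 0`,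
then the image of `b` in `G/B` has finite order, and this order is prime. -/
theorem addOrderOf_quotient_prime (G : Type*) [AddCommGroup G] (b : G) (hb : b ≠ 0)
    (B : AddSubgroup G) (hbB : b ∉ B) (hmax : ∀ C : AddSubgroup G, B < C → b ∈ C) :
    IsOfFinAddOrder (b : G ⧸ B) ∧ (addOrderOf (b : G ⧸ B)).Prime := by
  set q : G ⧸ B := (b : G ⧸ B) with hq
  have hq0 : q ≠ 0 := by
    simpa [hq, QuotientAddGroup.eq_zero_iff] using hbB
  -- every nonzero element of the quotient has `q` among its multiples
  have key : ∀ x : G ⧸ B, x ≠ 0 → ∃ k : ℤ, k • x = q := by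
    intro x hx
    obtain ⟨g, rfl⟩ := QuotientAddGroup.mk_surjective x
    set C := AddSubgroup.comap (QuotientAddGroup.mk' B)
      (AddSubgroup.zmultiples ((g : G ⧸ B))) with hC
    have hBC : B < C := by
      refine lt_of_le_of_ne ?_ ?_
      · intro a ha
        have h0 : ((a : G ⧸ B)) = 0 := (QuotientAddGroup.eq_zero_iff a).2 ha
        rw [hC, AddSubgroup.mem_comap]
        simpa [h0] using (AddSubgroup.zmultiples ((g : G ⧸ B))).zero_mem
      · intro heq
        have hgC : g ∈ C := by
          simp only [hC, AddSubgroup.mem_comap, QuotientAddGroup.mk'_apply]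
          exact AddSubgroup.mem_zmultiples _
        rw [← heq] at hgC
        exact hx ((QuotientAddGroup.eq_zero_iff g).2 hgC)
    have hbC := hmax C hBC
    simpa [hC, AddSubgroup.mem_comap, AddSubgroup.mem_zmultiples_iff] using hbC
  have hfin : IsOfFinAddOrder q := by
    rw [isOfFinAddOrder_iff_zsmul_eq_zero]
    by_cases h2 : (2 : ℤ) • q = 0
    · exact ⟨2, by norm_num, h2⟩
    · obtain ⟨k, hk⟩ := key _ h2
      refine ⟨2 * k - 1, by omega, ?_⟩
      calc (2 * k - 1) • q = k • ((2 : ℤ) • q) - q := by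
            rw [sub_smul, one_smul, mul_comm, mul_smul]
        _ = 0 := by rw [hk, sub_self]
  refine ⟨hfin, ?_⟩
  have hn0 : addOrderOf q ≠ 0 := hfin.addOrderOf_pos.ne'
  rw [Nat.prime_def]
  constructor
  · rcases Nat.lt_or_ge (addOrderOf q) 2 with h | h
    · have h1 : addOrderOf q = 1 := by omega
      exact absurd (AddMonoid.addOrderOf_eq_one_iff.mp h1) hq0
    · exact h
  · intro m hm
    by_cases hmn : m = addOrderOf q
    · exact Or.inr hmn
    left
    have hmpos : 0 < m :=
      Nat.pos_of_ne_zero (by rintro rfl; exact hn0 (Nat.eq_zero_of_zero_dvd hm))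
    have hmlt : m < addOrderOf q :=
      lt_of_le_of_ne (Nat.le_of_dvd (Nat.pos_of_ne_zero hn0) hm) hmn
    have hmq : (m : ℤ) • q ≠ 0 := by
      intro h0
      have hdn : addOrderOf q ∣ m := by
        rw [addOrderOf_dvd_iff_nsmul_eq_zero]
        simpa using h0
      have := Nat.le_of_dvd hmpos hdn
      omega
    obtain ⟨k, hk⟩ := key _ hmq
    have h0 : (k * m - 1 : ℤ) • q = 0 := by
      rw [sub_smul, mul_smul, hk, one_smul, sub_self]
    have hdvd : (addOrderOf q : ℤ) ∣ (k * m - 1) :=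
      addOrderOf_dvd_iff_zsmul_eq_zero.mpr h0
    have h1 : (m : ℤ) ∣ (k * m - 1) :=
      dvd_trans (Int.natCast_dvd_natCast.mpr hm) hdvd
    have h2 : (m : ℤ) ∣ k * m := dvd_mul_left _ _
    have hm1 : (m : ℤ) ∣ 1 := by simpa using dvd_sub h2 h1
    exact Nat.dvd_one.mp (by exact_mod_cast hm1)
end

section
/- Let G be an additive abelian group, let b ∈ G with b ≠ 0, and let B be a subgroup of G that is maximal subject to not containing b (i.e., b ∉ B and every subgroup of G strictly containing B contains b). Let p be the order of the image b̄ of b in G/B (which is prime). Then G/B is a p-group: for every element x of G/B there exists k ∈ ℕ such that p^k · x = 0. In particular, every element of G/B has finite order. -/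
/-- If `B` is a subgroup of the abelian group `G` maximal subject to not containing `b ≠ 0` and
`p` is the (prime) order of the image of `b` in `G/B`, then `G/B` is a `p`-group; in particular,
every element of `G/B` has finite order. -/
theorem quotient_is_pGroup (G : Type*) [AddCommGroup G] (b : G) (hb : b ≠ 0)
    (B : AddSubgroup G) (hbB : b ∉ B) (hmax : ∀ C : AddSubgroup G, B < C → b ∈ C)
    (p : ℕ) (hp : p = addOrderOf (b : G ⧸ B)) :
    (∀ x : G ⧸ B, ∃ k : ℕ, p ^ k • x = 0) ∧ ∀ x : G ⧸ B, IsOfFinAddOrder x := by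
  set β : G ⧸ B := (b : G ⧸ B) with hβ
  have hβ0 : β ≠ 0 := by
    simpa [hβ, QuotientAddGroup.eq_zero_iff] using hbB
  -- key: β belongs to every nonzero cyclic subgroup of G ⧸ B
  have key : ∀ x : G ⧸ B, x ≠ 0 → β ∈ AddSubgroup.zmultiples x := by
    intro x hx
    obtain ⟨g, hg⟩ := QuotientAddGroup.mk'_surjective B x
    set C := AddSubgroup.comap (QuotientAddGroup.mk' B) (AddSubgroup.zmultiples x) with hC
    have hBC : B < C := by
      constructor
      · intro y hy
        have h0 : (QuotientAddGroup.mk' B) y = 0 := (QuotientAddGroup.eq_zero_iff y).2 hy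
        show (QuotientAddGroup.mk' B) y ∈ AddSubgroup.zmultiples x
        rw [h0]; exact AddSubgroup.zero_mem _
      · intro hle
        have hgC : g ∈ C := by
          simp [hC, AddSubgroup.mem_comap, hg, AddSubgroup.mem_zmultiples]
        have : g ∈ B := hle hgC
        exact hx (by rw [← hg]; exact (QuotientAddGroup.eq_zero_iff g).2 this)
    exact hmax C hBC
  -- β has finite order
  have hβfin : IsOfFinAddOrder β := by
    by_cases h2 : (2 : ℤ) • β = 0
    · exact isOfFinAddOrder_iff_zsmul_eq_zero.2 ⟨2, by norm_num, h2⟩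
    · have h2β : (2 : ℤ) • β ≠ 0 := h2
      obtain ⟨k, hk⟩ := AddSubgroup.mem_zmultiples_iff.1 (key _ h2β)
      rw [smul_smul] at hk
      refine isOfFinAddOrder_iff_zsmul_eq_zero.2 ⟨k * 2 - 1, ?_, ?_⟩
      · omega
      · rw [sub_smul, hk, one_smul, sub_self]
  have hppos : 0 < p := by rw [hp]; exact hβfin.addOrderOf_pos
  -- p is prime
  have hprime : p.Prime := by
    rw [Nat.prime_def]
    constructor
    · by_contra h
      have hp1 : p = 1 := by omega
      exact hβ0 (AddMonoid.addOrderOf_eq_one_iff.1 (hp1 ▸ hp).symm)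
    · intro m hm
      by_cases hm1 : m = 1
      · left; exact hm1
      right
      by_contra hmp
      have hm0 : m ≠ 0 := by rintro rfl; simp at hm; omega
      have hmlt : m < p := lt_of_le_of_ne (Nat.le_of_dvd hppos hm) hmp
      have hmβ : (m : ℤ) • β ≠ 0 := by
        intro h
        have := addOrderOf_dvd_iff_zsmul_eq_zero.2 h
        rw [← hp] at this
        have : (p : ℤ) ∣ (m : ℤ) := this
        have := Int.le_of_dvd (by exact_mod_cast Nat.pos_of_ne_zero hm0) this
        omega
      obtain ⟨k, hk⟩ := AddSubgroup.mem_zmultiples_iff.1 (key _ hmβ)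
      rw [smul_smul] at hk
      have h1 : (k * m - 1) • β = 0 := by rw [sub_smul, hk, one_smul, sub_self]
      have hdvd : ((p : ℤ)) ∣ (k * m - 1) := by
        rw [hp]; exact addOrderOf_dvd_iff_zsmul_eq_zero.2 h1
      have hmdvd : (m : ℤ) ∣ (k * m - 1) := dvd_trans (by exact_mod_cast hm) hdvd
      have : (m : ℤ) ∣ 1 := (dvd_sub_right ⟨k, by ring⟩).mp hmdvd
      have := Int.le_of_dvd one_pos this
      omega
  -- every nonzero x has finite order
  have hfin : ∀ x : G ⧸ B, IsOfFinAddOrder x := by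
    intro x
    by_cases hx : x = 0
    · simp [hx]
    obtain ⟨c, hc⟩ := AddSubgroup.mem_zmultiples_iff.1 (key x hx)
    have hc0 : c ≠ 0 := by rintro rfl; simp at hc; exact hβ0 hc.symm
    have hpβ : (p : ℤ) • β = 0 := by
      rw [hp]; exact addOrderOf_dvd_iff_zsmul_eq_zero.1 dvd_rfl
    refine isOfFinAddOrder_iff_zsmul_eq_zero.2 ⟨(p : ℤ) * c, ?_, ?_⟩
    · have : (p : ℤ) ≠ 0 := by exact_mod_cast hppos.ne'
      exact mul_ne_zero this hc0
    · rw [mul_smul, hc, hpβ]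
  refine ⟨?_, hfin⟩
  intro x
  set n := addOrderOf x with hn
  have hn0 : n ≠ 0 := (hfin x).addOrderOf_pos.ne'
  have hall : ∀ {q : ℕ}, q.Prime → q ∣ n → q = p := by
    intro q hq hqn
    set y := (n / q) • x with hy
    have hyord : addOrderOf y = q := by
      rw [hy, addOrderOf_nsmul' x (Nat.div_ne_zero_iff.2 ⟨hq.pos.ne', Nat.le_of_dvd (Nat.pos_of_ne_zero hn0) hqn⟩)]
      rw [← hn, Nat.gcd_eq_right (Nat.div_dvd_of_dvd hqn),
        Nat.div_div_self hqn hn0]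
    have hy0 : y ≠ 0 := by
      intro h
      rw [h, addOrderOf_zero] at hyord
      exact hq.one_lt.ne' hyord.symm
    have : addOrderOf β ∣ addOrderOf y := addOrderOf_dvd_of_mem_zmultiples (key y hy0)
    rw [← hp, hyord] at this
    exact ((Nat.prime_dvd_prime_iff_eq hprime hq).1 this).symm
  have := Nat.eq_prime_pow_of_unique_prime_dvd hn0 hall
  exact ⟨n.primeFactorsList.length, by
    rw [← this]
    exact addOrderOf_nsmul_eq_zero x⟩
end

section
/- Let G be an additive abelian group, let b ∈ G with b ≠ 0, and let B be a subgroup of G that is maximal subject to not containing b (i.e., b ∉ B and every subgroup of G strictly containing B contains b). Then every finitely generated subgroup of the quotient group G/B is cyclic, i.e., is generated by a single element. -/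
open Finset

section Aux

variable {A : Type*} [AddCommGroup A] {β : A}

private lemma aux_mem_zmultiples (hkey : ∀ C : AddSubgroup A, C ≠ ⊥ → β ∈ C)
    {x : A} (hx : x ≠ 0) : ∃ k : ℤ, β = k • x := by
  have hne : AddSubgroup.zmultiples x ≠ ⊥ := by
    intro h
    exact hx (by simpa [h, AddSubgroup.mem_bot] using AddSubgroup.mem_zmultiples x)
  obtain ⟨k, hk⟩ := hkey _ hne
  exact ⟨k, hk.symm⟩

private lemma aux_torsion (hβ : β ≠ 0) (hkey : ∀ C : AddSubgroup A, C ≠ ⊥ → β ∈ C) :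
    ∀ x : A, IsOfFinAddOrder x := by
  intro x
  by_contra hfin
  have hx : x ≠ 0 := by rintro rfl; exact hfin (IsOfFinAddOrder.zero)
  obtain ⟨m, hm⟩ := aux_mem_zmultiples hkey hx
  have hm0 : m ≠ 0 := by rintro rfl; simp only [zero_smul] at hm; exact hβ hm
  have h2m : (2 * m) • x ≠ 0 := by
    intro h
    exact hfin (isOfFinAddOrder_iff_zsmul_eq_zero.mpr ⟨2 * m, mul_ne_zero two_ne_zero hm0, h⟩)
  obtain ⟨k, hk⟩ := aux_mem_zmultiples hkey h2m
  have : (m - k * (2 * m)) • x = 0 := by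
    rw [sub_smul, mul_smul, ← hm, ← hk, sub_self]
  apply hfin
  refine isOfFinAddOrder_iff_zsmul_eq_zero.mpr ⟨m - k * (2 * m), ?_, this⟩
  have : m - k * (2 * m) = m * (1 - 2 * k) := by ring
  rw [this]
  exact mul_ne_zero hm0 (by omega)

private lemma aux_prime (hβ : β ≠ 0) (hkey : ∀ C : AddSubgroup A, C ≠ ⊥ → β ∈ C)
    {q : ℕ} (hq : q.Prime) {x y : A} (hx : x ≠ 0)
    (hqy : (q : ℤ) • y = 0) : ∃ m : ℤ, y = m • x := by
  rcases eq_or_ne y 0 with rfl | hy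
  · exact ⟨0, by simp⟩
  obtain ⟨k, hk⟩ := aux_mem_zmultiples hkey hx
  obtain ⟨l, hl⟩ := aux_mem_zmultiples hkey hy
  have hql : ¬ (q : ℤ) ∣ l := by
    rintro ⟨c, rfl⟩
    apply hβ
    rw [hl, mul_comm, mul_smul, hqy, smul_zero]
  have hco : IsCoprime (l : ℤ) (q : ℤ) := by
    rw [Int.isCoprime_iff_gcd_eq_one]
    have : ¬ q ∣ l.natAbs := fun h => hql
      (dvd_trans (Int.natCast_dvd_natCast.mpr h) (Int.natAbs_dvd.mpr dvd_rfl))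
    have := (Nat.Prime.coprime_iff_not_dvd hq).mpr this
    simpa [Int.gcd, Nat.coprime_comm] using this
  obtain ⟨a, c, habc⟩ := hco
  refine ⟨a * k, ?_⟩
  calc y = (a * l + c * q) • y := by rw [habc, one_smul]
    _ = a • (l • y) + c • ((q : ℤ) • y) := by rw [add_smul, mul_smul, mul_smul]
    _ = a • β := by rw [hqy, smul_zero, add_zero, ← hl]
    _ = (a * k) • x := by rw [hk, mul_smul]

private lemma aux_count (hβ : β ≠ 0) (hkey : ∀ C : AddSubgroup A, C ≠ ⊥ → β ∈ C)
    (H : AddSubgroup A) [Fintype H] [DecidableEq H] :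
    ∀ n : ℕ, 0 < n → (Finset.univ.filter fun a : H => n • a = 0).card ≤ n := by
  intro n
  induction n using Nat.strong_induction_on with
  | _ n ih =>
    intro hn
    rcases Nat.lt_or_ge n 2 with h2 | h2
    · -- n = 1
      interval_cases n
      refine le_trans (Finset.card_le_one.mpr ?_) le_rfl
      intro a ha b hb
      simp only [Finset.mem_filter, one_nsmul] at ha hb
      rw [ha.2, hb.2]
    by_cases hp : n.Prime
    · -- n prime
      set S := Finset.univ.filter fun a : H => n • a = 0 with hS
      by_cases hS0 : ∀ a ∈ S, a = 0
      · calc S.card ≤ ({0} : Finset H).card := Finset.card_le_card fun a ha => by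
              simp [hS0 a ha]
          _ ≤ n := by simp; omega
      push_neg at hS0
      obtain ⟨x₀, hx₀S, hx₀⟩ := hS0
      have hx₀A : (x₀ : A) ≠ 0 := fun h => hx₀ (Subtype.ext h)
      have hnx₀ : n • x₀ = 0 := by simpa [hS] using hx₀S
      have hsub : S ⊆ (Finset.range n).image fun k : ℕ => (k : ℤ) • x₀ := by
        intro y hyS
        have hny : n • y = 0 := by simpa [hS] using hyS
        have hnyA : (n : ℤ) • (y : A) = 0 := by
          have : ((n • y : H) : A) = 0 := by rw [hny]; rfl
          simpa [natCast_zsmul] using this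
        obtain ⟨m, hm⟩ := aux_prime hβ hkey hp hx₀A hnyA
        have hmH : y = m • x₀ := by
          apply Subtype.ext
          simpa using hm
        have hmod : y = ((m % (n : ℤ)).toNat : ℤ) • x₀ := by
          have h1 : ((m % (n : ℤ)).toNat : ℤ) = m % (n : ℤ) :=
            Int.toNat_of_nonneg (Int.emod_nonneg m (by exact_mod_cast hn.ne'))
          rw [hmH, h1]
          have h2 : m = m % (n : ℤ) + (n : ℤ) * (m / (n : ℤ)) := (Int.emod_add_mul_ediv m n).symm
          have hnx₀' : (n : ℤ) • x₀ = 0 := by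
            rw [natCast_zsmul]; exact hnx₀
          calc m • x₀ = (m % (n : ℤ) + (n : ℤ) * (m / (n : ℤ))) • x₀ := by rw [← h2]
            _ = (m % (n : ℤ)) • x₀ + (m / (n : ℤ)) • ((n : ℤ) • x₀) := by
                rw [add_smul, mul_comm, mul_smul]
            _ = (m % (n : ℤ)) • x₀ := by rw [hnx₀', smul_zero, add_zero]
        refine Finset.mem_image.mpr ⟨(m % (n : ℤ)).toNat, Finset.mem_range.mpr ?_, hmod.symm⟩
        have : m % (n : ℤ) < n := Int.emod_lt_of_pos m (by exact_mod_cast hn)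
        omega
      calc S.card ≤ _ := Finset.card_le_card hsub
        _ ≤ (Finset.range n).card := Finset.card_image_le
        _ = n := Finset.card_range n
    · -- n composite
      have hn1 : n ≠ 1 := by omega
      set q := n.minFac with hqdef
      have hq : q.Prime := Nat.minFac_prime hn1
      have hqdvd : q ∣ n := Nat.minFac_dvd n
      set m := n / q with hmdef
      have hqm : q * m = n := Nat.mul_div_cancel' hqdvd
      have hm1 : 1 < m := by
        rcases Nat.lt_or_ge 1 m with h | h
        · exact h
        · interval_cases m
          · omega
          · exact absurd (by omega : n = q) (fun h => hp (h ▸ hq))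
      have hmlt : m < n := by nlinarith [hq.two_le, hqm]
      have hqlt : q < n := by nlinarith [hq.two_le, hqm]
      set S := Finset.univ.filter fun a : H => n • a = 0 with hS
      have hbound : S.card ≤ m * (S.image fun x => m • x).card := by
        apply Finset.card_le_mul_card_image
        intro a ha
        obtain ⟨x₀, hx₀S, hx₀⟩ := Finset.mem_image.mp ha
        have hinj : Set.InjOn (fun x : H => x - x₀)
            ↑(S.filter fun x => m • x = a) := by
          intro u _ v _ huv
          simpa using sub_left_injective huv
        calc (S.filter fun x => m • x = a).card
            ≤ (Finset.univ.filter fun a : H => m • a = 0).card := by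
              apply Finset.card_le_card_of_injOn (fun x => x - x₀) _ hinj
              intro u hu
              simp only [Finset.mem_coe, Finset.mem_filter, Finset.mem_univ, true_and, hS] at hu ⊢
              rw [smul_sub, hu.2, hx₀, sub_self]
          _ ≤ m := ih m hmlt (by omega)
      have himg : (S.image fun x => m • x) ⊆ Finset.univ.filter fun a : H => q • a = 0 := by
        intro a ha
        obtain ⟨x, hxS, hx⟩ := Finset.mem_image.mp ha
        simp only [Finset.mem_filter, Finset.mem_univ, true_and, hS] at hxS ⊢
        rw [← hx, smul_smul, hqm, hxS]
      calc S.card ≤ m * (S.image fun x => m • x).card := hbound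
        _ ≤ m * (Finset.univ.filter fun a : H => q • a = 0).card :=
            Nat.mul_le_mul_left m (Finset.card_le_card himg)
        _ ≤ m * q := Nat.mul_le_mul_left m (ih q hqlt hq.pos)
        _ = n := by rw [mul_comm]; exact hqm

private lemma aux_main (hβ : β ≠ 0) (hkey : ∀ C : AddSubgroup A, C ≠ ⊥ → β ∈ C)
    (H : AddSubgroup A) (hFG : H.FG) : ∃ g : A, H = AddSubgroup.zmultiples g := by
  have hfg : AddGroup.FG H := (AddGroup.fg_iff_addSubgroup_fg H).mpr hFG
  have htors : AddMonoid.IsTorsion H := by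
    intro h
    obtain ⟨nn, hnn, h0⟩ := isOfFinAddOrder_iff_nsmul_eq_zero.mp
      (aux_torsion hβ hkey (h : A))
    exact isOfFinAddOrder_iff_nsmul_eq_zero.mpr
      ⟨nn, hnn, Subtype.ext (by simpa using h0)⟩
  have hfin : Finite H := AddCommGroup.finite_of_fg_torsion H htors
  have : Fintype H := Fintype.ofFinite H
  classical
  have hcyc : IsAddCyclic H :=
    isAddCyclic_of_card_nsmul_eq_zero_le (aux_count hβ hkey H)
  obtain ⟨g, hg⟩ := hcyc.exists_generator
  refine ⟨(g : A), ?_⟩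
  ext x
  constructor
  · intro hx
    obtain ⟨k, hk⟩ := hg ⟨x, hx⟩
    refine ⟨k, ?_⟩
    have := congrArg (fun z : H => (z : A)) hk
    simpa using this
  · rintro ⟨k, rfl⟩
    exact AddSubgroup.zsmul_mem H g.2 k

end Aux

/-- If `B` is a subgroup of the abelian group `G` maximal subject to not containing `b ≠ 0`,
then every finitely generated subgroup of `G/B` is cyclic. -/
theorem quotient_fg_subgroup_cyclic (G : Type*) [AddCommGroup G] (b : G) (hb : b ≠ 0)
    (B : AddSubgroup G) (hbB : b ∉ B) (hmax : ∀ C : AddSubgroup G, B < C → b ∈ C) :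
    ∀ H : AddSubgroup (G ⧸ B), H.FG → ∃ g : G ⧸ B, H = AddSubgroup.zmultiples g := by
  intro H hH
  set β : G ⧸ B := QuotientAddGroup.mk b with hβdef
  have hβ : β ≠ 0 := by
    simpa [hβdef, QuotientAddGroup.eq_zero_iff] using hbB
  have hkey : ∀ C : AddSubgroup (G ⧸ B), C ≠ ⊥ → β ∈ C := by
    intro C hC
    have hle : B ≤ C.comap (QuotientAddGroup.mk' B) := by
      intro x hx
      simp only [AddSubgroup.mem_comap]
      have h0 : QuotientAddGroup.mk' B x = 0 := (QuotientAddGroup.eq_zero_iff x).mpr hx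
      rw [h0]
      exact C.zero_mem
    have hlt : B < C.comap (QuotientAddGroup.mk' B) := by
      refine lt_of_le_of_ne hle ?_
      intro h
      apply hC
      rw [eq_bot_iff]
      intro z hz
      obtain ⟨y, rfl⟩ := QuotientAddGroup.mk'_surjective B z
      have hy : y ∈ C.comap (QuotientAddGroup.mk' B) := hz
      rw [← h] at hy
      simpa [AddSubgroup.mem_bot, QuotientAddGroup.eq_zero_iff] using hy
    have := hmax _ hlt
    simpa [AddSubgroup.mem_comap] using this
  exact aux_main hβ hkey H hH
end

section
/- Let G be an additive abelian group, let b ∈ G with b ≠ 0, and let B be a subgroup of G that is maximal subject to not containing b (i.e., b ∉ B and every subgroup of G strictly containing B contains b). Then the quotient group G/B is isomorphic to a subgroup of ℚ/ℤ; that is, there exists an injective additive group homomorphism from G/B into ℚ/ℤ. -/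
noncomputable instance : DivisibleBy ℚ ℕ := AddGroup.divisibleByNatOfDivisibleByInt ℚ

noncomputable instance : DivisibleBy (ℚ ⧸ AddSubgroup.zmultiples (1 : ℚ)) ℕ :=
  QuotientAddGroup.divisibleBy _

noncomputable instance : DivisibleBy (ℚ ⧸ AddSubgroup.zmultiples (1 : ℚ)) ℤ :=
  AddGroup.divisibleByIntOfDivisibleByNat _

/-- If `B` is a subgroup of the abelian group `G` maximal subject to not containing `b ≠ 0`,
then `G/B` is isomorphic to a subgroup of `ℚ/ℤ`: there is an injective additive group
homomorphism from `G/B` into `ℚ/ℤ`. -/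
theorem quotient_embeds_in_ratCircle (G : Type*) [AddCommGroup G] (b : G) (hb : b ≠ 0)
    (B : AddSubgroup G) (hbB : b ∉ B) (hmax : ∀ C : AddSubgroup G, B < C → b ∈ C) :
    ∃ φ : (G ⧸ B) →+ (ℚ ⧸ AddSubgroup.zmultiples (1 : ℚ)), Function.Injective φ := by
  set Q := ℚ ⧸ AddSubgroup.zmultiples (1 : ℚ) with hQ
  set H := G ⧸ B with hH
  set π : G →+ H := QuotientAddGroup.mk' B with hπ
  set β : H := π b with hβ
  have hβ0 : β ≠ 0 := fun h => hbB ((QuotientAddGroup.eq_zero_iff b).1 h)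
  -- every nonzero subgroup of H contains β
  have key : ∀ S : AddSubgroup H, S ≠ ⊥ → β ∈ S := by
    intro S hS
    obtain ⟨y, hyS, hy0⟩ := S.bot_or_exists_ne_zero.resolve_left hS
    obtain ⟨x, rfl⟩ := QuotientAddGroup.mk'_surjective B y
    have hBC : B < S.comap π := by
      constructor
      · intro g hg
        have : π g = 0 := (QuotientAddGroup.eq_zero_iff g).2 hg
        simpa [AddSubgroup.mem_comap, this] using S.zero_mem
      · intro hle
        have hx : x ∈ B := hle hyS
        exact hy0 ((QuotientAddGroup.eq_zero_iff x).2 hx)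
    exact hmax _ hBC
  -- β has finite order
  have hfin : IsOfFinAddOrder β := by
    by_contra hinf
    have h2 : (2 : ℤ) • β ≠ 0 := by
      intro h
      exact hinf (isOfFinAddOrder_iff_zsmul_eq_zero.2 ⟨2, by norm_num, h⟩)
    have hne : AddSubgroup.zmultiples ((2 : ℤ) • β) ≠ ⊥ := by
      intro h
      have hm := AddSubgroup.mem_zmultiples ((2 : ℤ) • β)
      rw [h, AddSubgroup.mem_bot] at hm
      exact h2 hm
    obtain ⟨k, hk⟩ := key _ hne
    have : (2 * k - 1 : ℤ) • β = 0 := by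
      have : (k * 2 : ℤ) • β = β := by
        simpa [mul_comm, mul_zsmul] using hk
      rw [sub_zsmul, mul_comm, this]
      simp
    refine hinf (isOfFinAddOrder_iff_zsmul_eq_zero.2 ⟨2 * k - 1, by omega, this⟩)
  set n : ℕ := addOrderOf β with hn
  have hn0 : 0 < n := hfin.addOrderOf_pos
  have hn1 : n ≠ 1 := fun h => hβ0 (AddMonoid.addOrderOf_eq_one_iff.mp h)
  have hn2 : 2 ≤ n := by omega
  -- the target element 1/n in Q
  set q : Q := QuotientAddGroup.mk (1 / (n : ℚ)) with hq
  have hq0 : q ≠ 0 := by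
    rw [hq, Ne, QuotientAddGroup.eq_zero_iff, AddSubgroup.mem_zmultiples_iff]
    rintro ⟨k, hk⟩
    have hnq : (0 : ℚ) < 1 / (n : ℚ) := by positivity
    have hlt : (1 : ℚ) / (n : ℚ) < 1 := by
      rw [div_lt_one (by exact_mod_cast hn0)]
      exact_mod_cast hn2
    have hk' : (k : ℚ) = 1 / (n : ℚ) := by simpa using hk
    rcases le_or_gt k 0 with h | h
    · have : (k : ℚ) ≤ 0 := by exact_mod_cast h
      linarith
    · have : (1 : ℚ) ≤ (k : ℚ) := by exact_mod_cast h
      linarith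
  -- homomorphism ℤ → H, k ↦ k • β
  set ψ : ℤ →+ H := zmultiplesHom H β with hψ
  set χ : ℤ →+ Q := zmultiplesHom Q q with hχ
  have hker : ψ.ker ≤ χ.ker := by
    intro k hk
    have hk' : k • β = 0 := hk
    have hdvd : (n : ℤ) ∣ k := addOrderOf_dvd_iff_zsmul_eq_zero.2 hk'
    obtain ⟨m, rfl⟩ := hdvd
    show ((n : ℤ) * m) • q = 0
    rw [mul_comm, mul_zsmul]
    have : (n : ℤ) • q = 0 := by
      rw [hq, ← QuotientAddGroup.mk_zsmul, QuotientAddGroup.eq_zero_iff,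
        AddSubgroup.mem_zmultiples_iff]
      refine ⟨1, ?_⟩
      have hn' : (n : ℚ) ≠ 0 := by exact_mod_cast hn0.ne'
      simp [zsmul_eq_mul, hn']
    rw [this, smul_zero]
  -- factor χ through ℤ ⧸ ker ψ
  set lift : (ℤ ⧸ ψ.ker) →+ Q := QuotientAddGroup.lift ψ.ker χ hker with hlift
  set e : (ℤ ⧸ ψ.ker) ≃+ ψ.range := QuotientAddGroup.quotientKerEquivRange ψ with he
  set f : ψ.range →+ Q := lift.comp (e.symm : ψ.range ≃+ (ℤ ⧸ ψ.ker)).toAddMonoidHom with hf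
  have hfβ : f ⟨β, ⟨1, by simp [hψ]⟩⟩ = q := by
    have h1 : e (QuotientAddGroup.mk 1) = ⟨β, ⟨1, by simp [hψ]⟩⟩ := by
      apply Subtype.ext
      simp only [he, QuotientAddGroup.quotientKerEquivRange]
      show ψ 1 = β
      simp [hψ]
    have h2 : e.symm ⟨β, ⟨1, by simp [hψ]⟩⟩ = QuotientAddGroup.mk 1 := by
      rw [← h1, AddEquiv.symm_apply_apply]
    rw [hf]
    simp only [AddMonoidHom.comp_apply, AddEquiv.coe_toAddMonoidHom, h2]
    show χ 1 = q
    simp [hχ]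
  -- extend f to all of H using divisibility/injectivity of Q
  obtain ⟨φ, hφ⟩ := (Module.Baer.of_divisible Q).extension_property_addMonoidHom
    ψ.range.subtype Subtype.coe_injective f
  have hφβ : φ β = q := by
    have := DFunLike.congr_fun hφ ⟨β, ⟨1, by simp [hψ]⟩⟩
    simpa [hfβ] using this
  refine ⟨φ, ?_⟩
  rw [← AddMonoidHom.ker_eq_bot_iff]
  by_contra hkerφ
  have : β ∈ φ.ker := key _ hkerφ
  rw [AddMonoidHom.mem_ker, hφβ] at this
  exact hq0 this
end

section
/- Let add : ℕ → ℕ → ℕ, neg : ℕ → ℕ, and 0̂ ∈ ℕ be a computable abelian group structure on ℕ (add and neg are computable functions and (ℕ, add, neg, 0̂) is an abelian group), and let b ∈ ℕ with b ≠ 0̂. Then there exists a computable coloring c : ℕ → {0,1,2} with 3 colors such that the equation x − y = b has no monochromatic solutions; that is, there are no x, y ∈ ℕ with c(x) = c(y) and add(x, neg(y)) = b. -/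
/-- Choose a natural number in `{0,1,2}` different from both `a` and `b`. -/
def chooseN (a b : ℕ) : ℕ :=
  if a ≠ 0 ∧ b ≠ 0 then 0 else if a ≠ 1 ∧ b ≠ 1 then 1 else 2

theorem chooseN_ne_left (a b : ℕ) : chooseN a b ≠ a := by
  unfold chooseN
  split_ifs with h1 h2 <;> omega

theorem chooseN_ne_right (a b : ℕ) : chooseN a b ≠ b := by
  unfold chooseN
  split_ifs with h1 h2 <;> omega

theorem chooseN_lt (a b : ℕ) : chooseN a b < 3 := by
  unfold chooseN
  split_ifs <;> omega

theorem chooseN_primrec : Primrec₂ chooseN := by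
  have h0 : PrimrecRel fun a b : ℕ => a ≠ 0 ∧ b ≠ 0 :=
    ((PrimrecRel.comp Primrec.eq Primrec.fst (Primrec.const 0)).not).and
      ((PrimrecRel.comp Primrec.eq Primrec.snd (Primrec.const 0)).not)
  have h1 : PrimrecRel fun a b : ℕ => a ≠ 1 ∧ b ≠ 1 :=
    ((PrimrecRel.comp Primrec.eq Primrec.fst (Primrec.const 1)).not).and
      ((PrimrecRel.comp Primrec.eq Primrec.snd (Primrec.const 1)).not)
  exact Primrec₂.mk <| Primrec.ite h0 (Primrec.const 0)
    (Primrec.ite h1 (Primrec.const 1) (Primrec.const 2))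

/-- The greedy coloring list: `colList fi fd n` is the list of colors of `0, …, n-1`,
where each `m` gets a color different from those of `fi m` and `fd m` when they are
smaller than `m`. -/
def colList (fi fd : ℕ → ℕ) : ℕ → List ℕ
  | 0 => []
  | n + 1 =>
      colList fi fd n ++
        [chooseN ((colList fi fd n).getD (fi n) 0) ((colList fi fd n).getD (fd n) 0)]

/-- The greedy coloring of `n`. -/
def colN (fi fd : ℕ → ℕ) (n : ℕ) : ℕ :=
  (colList fi fd (n + 1)).getD n 0

theorem colList_length (fi fd : ℕ → ℕ) : ∀ n, (colList fi fd n).length = n := by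
  intro n
  induction n with
  | zero => rfl
  | succ n ih => simp [colList, ih]

theorem colList_getD (fi fd : ℕ → ℕ) {k n : ℕ} (h : k < n) :
    (colList fi fd n).getD k 0 = colN fi fd k := by
  induction n with
  | zero => omega
  | succ n ih =>
    rcases Nat.lt_succ_iff_lt_or_eq.mp h with h' | h'
    · rw [← ih h']
      show (colList fi fd n ++ _).getD k 0 = _
      rw [List.getD_append _ _ _ _ (by rw [colList_length]; omega)]
    · subst h'; rfl

theorem colN_eq (fi fd : ℕ → ℕ) (n : ℕ) :
    colN fi fd n =
      chooseN ((colList fi fd n).getD (fi n) 0) ((colList fi fd n).getD (fd n) 0) := by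
  show (colList fi fd n ++ [_]).getD n 0 = _
  rw [List.getD_append_right _ _ _ _ (by rw [colList_length])]
  simp [colList_length]

theorem colN_lt (fi fd : ℕ → ℕ) (n : ℕ) : colN fi fd n < 3 := by
  rw [colN_eq]; exact chooseN_lt _ _

theorem colN_ne_fi (fi fd : ℕ → ℕ) {n : ℕ} (h : fi n < n) :
    colN fi fd n ≠ colN fi fd (fi n) := by
  rw [colN_eq, colList_getD fi fd h]
  exact chooseN_ne_left _ _

theorem colN_ne_fd (fi fd : ℕ → ℕ) {n : ℕ} (h : fd n < n) :
    colN fi fd n ≠ colN fi fd (fd n) := by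
  rw [colN_eq, colList_getD fi fd h]
  exact chooseN_ne_right _ _

theorem colN_computable {fi fd : ℕ → ℕ} (hfi : Computable fi) (hfd : Computable fd) :
    Computable (colN fi fd) := by
  have hlist : Computable (colList fi fd) := by
    have hstep : Computable₂ fun (n : ℕ) (p : ℕ × List ℕ) =>
        p.2 ++ [chooseN (p.2.getD (fi p.1) 0) (p.2.getD (fd p.1) 0)] := by
      have hgetD : Computable₂ fun (l : List ℕ) (k : ℕ) => l.getD k 0 :=
        (Primrec.list_getD 0).to_comp
      have hL : Computable fun (p : ℕ × (ℕ × List ℕ)) => p.2.2 :=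
        Computable.snd.comp Computable.snd
      have hm : Computable fun (p : ℕ × (ℕ × List ℕ)) => p.2.1 :=
        Computable.fst.comp Computable.snd
      have ha : Computable fun (p : ℕ × (ℕ × List ℕ)) => p.2.2.getD (fi p.2.1) 0 :=
        hgetD.comp hL (hfi.comp hm)
      have hb : Computable fun (p : ℕ × (ℕ × List ℕ)) => p.2.2.getD (fd p.2.1) 0 :=
        hgetD.comp hL (hfd.comp hm)
      exact Computable.list_concat.comp hL (chooseN_primrec.to_comp.comp ha hb)
    have := Computable.nat_rec Computable.id (Computable.const ([] : List ℕ)) hstep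
    exact this.of_eq fun n => by
      induction n with
      | zero => rfl
      | succ n ih =>
        simp only [id_eq] at ih ⊢
        rw [show (Nat.rec [] (fun y IH => (y, IH).2 ++ [chooseN ((y, IH).2.getD (fi (y, IH).1) 0) ((y, IH).2.getD (fd (y, IH).1) 0)]) n : List ℕ) = colList fi fd n from ih]
        rfl
  have hgetD : Computable₂ fun (l : List ℕ) (k : ℕ) => l.getD k 0 :=
    (Primrec.list_getD 0).to_comp
  exact hgetD.comp (hlist.comp (Computable.succ)) Computable.id

/-- For every computable abelian group structure `(add, neg, z)` on `ℕ` and every `b ≠ z`,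
there is a computable `3`-coloring of `ℕ` such that `x - y = b` has no monochromatic
solutions. -/
theorem computable_three_coloring
    (add : ℕ → ℕ → ℕ) (neg : ℕ → ℕ) (z : ℕ)
    (hadd : Computable₂ add) (hneg : Computable neg)
    (add_assoc : ∀ x y w, add (add x y) w = add x (add y w))
    (add_comm : ∀ x y, add x y = add y x)
    (zero_add : ∀ x, add z x = x)
    (neg_add : ∀ x, add (neg x) x = z)
    (b : ℕ) (hb : b ≠ z) :
    ∃ c : ℕ → Fin 3, Computable c ∧ ¬ ∃ x y : ℕ, c x = c y ∧ add x (neg y) = b := by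
  set fi : ℕ → ℕ := fun x => add x b with hfi_def
  set fd : ℕ → ℕ := fun x => add x (neg b) with hfd_def
  have hfi : Computable fi := hadd.comp Computable.id (Computable.const b)
  have hfd : Computable fd := hadd.comp Computable.id (Computable.const (neg b))
  have hcol := colN_computable hfi hfd
  refine ⟨fun n => ⟨colN fi fd n % 3, Nat.mod_lt _ (by norm_num)⟩, ?_, ?_⟩
  · rw [← Computable.encode_iff]
    have : Computable fun n => colN fi fd n % 3 :=
      (Primrec.nat_mod.to_comp).comp hcol (Computable.const 3)
    exact this.of_eq fun n => rfl
  · rintro ⟨x, y, hcxy, hxy⟩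
    have hcol_eq : colN fi fd x = colN fi fd y := by
      have := congrArg Fin.val hcxy
      simp only [Nat.mod_eq_of_lt (colN_lt fi fd _)] at this
      exact this
    -- basic group facts
    have add_z : ∀ w, add w z = w := fun w => (add_comm w z).trans (zero_add w)
    have add_neg : ∀ w, add w (neg w) = z := fun w => (add_comm w (neg w)).trans (neg_add w)
    -- x = add y b
    have hx : x = add y b := by
      have h1 : add (add x (neg y)) y = add b y := by rw [hxy]
      rw [add_assoc, neg_add, add_z] at h1
      rw [h1, add_comm]
    -- y = fd x
    have hy : fd x = y := by
      show add x (neg b) = y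
      rw [hx, add_assoc, add_neg, add_z]
    have hxy_ne : x ≠ y := by
      intro h
      apply hb
      have h1 : add (neg y) x = add (neg y) (add y b) := by rw [hx]
      rw [h] at h1
      rw [neg_add, ← add_assoc, neg_add, zero_add] at h1
      exact h1.symm
    rcases Nat.lt_or_ge x y with hlt | hge
    · -- fi y = x < y
      have hfiy : fi y = x := hx.symm
      have := colN_ne_fi fi fd (n := y) (by rw [hfiy]; exact hlt)
      rw [hfiy] at this
      exact this hcol_eq.symm
    · have hlt : y < x := lt_of_le_of_ne hge (Ne.symm hxy_ne)
      have := colN_ne_fd fi fd (n := x) (by rw [hy]; exact hlt)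
      rw [hy] at this
      exact this hcol_eq
end

section
/- Let A be an m × n matrix with integer entries and let b ∈ ℤ^m with b ≠ 0. The system of linear equations A·x = b is partition regular over ℤ (i.e., for every k ≥ 1 and every coloring c : ℤ → {0,…,k−1} there exists x = (x₁,…,xₙ) ∈ ℤⁿ with A·x = b and c(x₁) = c(x₂) = ⋯ = c(xₙ)) if and only if it has a constant solution, i.e., there exists z ∈ ℤ such that A·(z,z,…,z)ᵀ = b. -/
/-- **Rado's theorem (inhomogeneous case).** For an `m × n` integer matrix `A` and `b ≠ 0` in
`ℤ^m`, the system `A·x = b` is partition regular over `ℤ` (every finite coloring of `ℤ` admits a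
monochromatic solution) if and only if it has a constant solution. -/
theorem rado_inhomogeneous (m n : ℕ) (A : Matrix (Fin m) (Fin n) ℤ)
    (b : Fin m → ℤ) (hb : b ≠ 0) :
    (∀ k : ℕ, 1 ≤ k → ∀ c : ℤ → Fin k,
        ∃ x : Fin n → ℤ, A.mulVec x = b ∧ ∀ i j : Fin n, c (x i) = c (x j))
    ↔ ∃ z : ℤ, A.mulVec (fun _ => z) = b := by
  constructor
  · intro H
    set s : Fin m → ℤ := fun i => ∑ j, A i j with hs
    rcases Nat.eq_zero_or_pos n with rfl | hn
    · exfalso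
      obtain ⟨x, hx, -⟩ := H 1 le_rfl (fun _ => 0)
      apply hb
      funext i
      rw [← hx]
      simp [Matrix.mulVec, dotProduct]
    have key : ∀ N : ℕ, 0 < N → ∃ t : ℤ, ∀ i, (N : ℤ) ∣ t * s i - b i := by
      intro N hN
      obtain ⟨N', rfl⟩ : ∃ N', N = N' + 1 := ⟨N - 1, (Nat.succ_pred_eq_of_pos hN).symm⟩
      obtain ⟨x, hx, hmono⟩ := H (N' + 1) (Nat.succ_le_succ (Nat.zero_le _))
        (fun z => ((z : ZMod (N' + 1)) : Fin (N' + 1)))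
      set t : ℤ := x ⟨0, hn⟩ with ht
      refine ⟨t, fun i => ?_⟩
      have hdvd : ∀ j : Fin n, ((N' + 1 : ℕ) : ℤ) ∣ t - x j := by
        intro j
        have h1 : ((t : ZMod (N' + 1)) : Fin (N' + 1)) = ((x j : ZMod (N' + 1)) : Fin (N' + 1)) :=
          hmono ⟨0, hn⟩ j
        have h2 : (t : ZMod (N' + 1)) = (x j : ZMod (N' + 1)) := h1
        have h3 := (ZMod.intCast_eq_intCast_iff _ _ _).mp h2
        exact dvd_sub_comm.mp h3.dvd
      have heq : t * s i - b i = ∑ j, A i j * (t - x j) := by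
        rw [← hx]
        simp only [Matrix.mulVec, dotProduct, hs, Finset.mul_sum,
          ← Finset.sum_sub_distrib]
        exact Finset.sum_congr rfl fun j _ => by ring
      rw [heq]
      exact Finset.dvd_sum fun j _ => Dvd.dvd.mul_left (hdvd j) _
    have h1 : ∀ i, s i = 0 → b i = 0 := by
      intro i hsi
      obtain ⟨t, ht⟩ := key ((b i).natAbs + 1) (Nat.succ_pos _)
      have := ht i
      rw [hsi, mul_zero, zero_sub] at this
      have hz : -b i = 0 := by
        refine Int.eq_zero_of_abs_lt_dvd this ?_
        rw [abs_neg, Int.abs_eq_natAbs]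
        exact_mod_cast Nat.lt_succ_self _
      linarith
    have h2 : ∀ i, s i ∣ b i := by
      intro i
      rcases eq_or_ne (s i) 0 with hsi | hsi
      · rw [hsi, h1 i hsi]
      obtain ⟨t, ht⟩ := key (s i).natAbs (Int.natAbs_pos.mpr hsi)
      have hd := ht i
      have hsd : s i ∣ ((s i).natAbs : ℤ) := Int.dvd_natAbs.mpr dvd_rfl
      have hd' : s i ∣ t * s i - b i := hsd.trans hd
      have h4 : s i ∣ t * s i := Dvd.intro_left t rfl
      have := h4.sub hd'
      simpa using this
    have h3 : ∀ i j, s i * b j = s j * b i := by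
      intro i j
      obtain ⟨t, ht⟩ := key ((s i * b j - s j * b i).natAbs + 1) (Nat.succ_pos _)
      have hdiff : ((((s i * b j - s j * b i).natAbs + 1 : ℕ)) : ℤ) ∣ (s i * b j - s j * b i) := by
        have hi := ht i
        have hj := ht j
        have h7 : (((s i * b j - s j * b i).natAbs + 1 : ℕ) : ℤ) ∣
            s j * (t * s i - b i) - s i * (t * s j - b j) :=
          dvd_sub (Dvd.dvd.mul_left hi _) (Dvd.dvd.mul_left hj _)
        have h8 : s j * (t * s i - b i) - s i * (t * s j - b j) = s i * b j - s j * b i := by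
          ring
        rwa [h8] at h7
      have hzero : s i * b j - s j * b i = 0 := by
        refine Int.eq_zero_of_abs_lt_dvd hdiff ?_
        rw [Int.abs_eq_natAbs]
        exact_mod_cast Nat.lt_succ_self _
      linarith
    obtain ⟨i0, hi0⟩ : ∃ i0, b i0 ≠ 0 := Function.ne_iff.mp hb
    have hsi0 : s i0 ≠ 0 := fun h => hi0 (h1 i0 h)
    obtain ⟨z, hz⟩ := h2 i0
    refine ⟨z, ?_⟩
    funext j
    have hzj : s j * z = b j := by
      have h5 := h3 j i0
      rw [hz] at h5
      have h6 : s i0 * (s j * z) = s i0 * b j := by linarith [h5]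
      exact mul_left_cancel₀ hsi0 h6
    rw [← hzj]
    simp [Matrix.mulVec, dotProduct, hs, Finset.sum_mul]
  · rintro ⟨z, hz⟩ k hk c
    exact ⟨fun _ => z, hz, fun i j => rfl⟩
end
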